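/- Let X be a convex subset of a real normed vector space and let f_n : X → ℝ (n = 1,…,N) be differentiable functions that are each α-strongly convex on X, with ‖∇f_n(x)‖_* ≤ G₂ for all x ∈ X and all n. Let x₁ ∈ X and x_{n+1} ∈ argmin_{x∈X} Σ_{k=1}^n f_k(x) for n ≥ 1 (Follow-the-Leader). Then Σ_{n=1}^N f_n(x_n) ≤ inf_{x∈X} Σ_{n=1}^N f_n(x) + (G₂²/(2α)) Σ_{n=1}^N 1/n ≤ inf_{x∈X} Σ_{n=1}^N f_n(x) + (G₂²/(2α)) (ln N + 1). -/

import Mathlib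

open Finset Filter Topology

/-!
The cumulative loss `F m = ∑_{k ≤ m} f k` is `m α`-strongly convex, so its minimiser
`x (m + 1)` enjoys quadratic growth: `F m (x (m + 1)) + m α / 2 ‖y - x (m + 1)‖² ≤ F m y`.
By induction on `m` ("be the leader"), the loss of round `m + 1` exceeds the leader's by at most
`G₂ d - (m + 1) α / 2 d²` with `d = ‖x (m + 2) - x (m + 1)‖`, and this is at most
`G₂² / (2 α (m + 1))`; the harmonic sum is at most `log N + 1`.
-/

section StrongConvexity

variable {E : Type*} [NormedAddCommGroup E] [NormedSpace ℝ E] {s : Set E} {m : ℝ}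

lemma strongConvexOn_of_subgradient {f : E → ℝ} (hs : Convex ℝ s) (g : E → E →L[ℝ] ℝ)
    (hg : ∀ y ∈ s, ∀ z ∈ s, f z ≥ f y + g y (z - y) + m / 2 * ‖z - y‖ ^ 2) :
    StrongConvexOn s m f := by
  refine ⟨hs, fun x hx y hy a b ha hb hab => ?_⟩
  set p := a • x + b • y
  have hp : p ∈ s := hs hx hy ha hb hab
  have hxp : x - p = b • (x - y) := by
    simp only [p, show a = 1 - b by linarith]; module
  have hyp : y - p = -(a • (x - y)) := by
    simp only [p, show b = 1 - a by linarith]; module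
  have hx' := hg p hp x hx
  have hy' := hg p hp y hy
  rw [hxp, map_smul, norm_smul, Real.norm_of_nonneg hb] at hx'
  rw [hyp, map_neg, map_smul, norm_neg, norm_smul, Real.norm_of_nonneg ha] at hy'
  simp only [smul_eq_mul] at hx' hy' ⊢
  obtain rfl := eq_sub_of_add_eq hab
  nlinarith [mul_le_mul_of_nonneg_left hx' ha, mul_le_mul_of_nonneg_left hy' hb]

lemma StrongConvexOn.sum {ι : Type*} {f : ι → E → ℝ} {t : Finset ι} (hs : Convex ℝ s)
    (hf : ∀ i ∈ t, StrongConvexOn s m (f i)) :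
    StrongConvexOn s (#t * m) (fun x => ∑ i ∈ t, f i x) := by
  classical
  induction t using Finset.induction_on with
  | empty => simpa using convexOn_const 0 hs
  | insert i t hi ih =>
    have h := (hf i (mem_insert_self i t)).add (ih fun j hj => hf j (mem_insert_of_mem hj))
    unfold StrongConvexOn at h ⊢
    convert h using 1
    · ext r; simp only [Pi.add_apply, card_insert_of_notMem hi]; push_cast; ring
    · ext x; simp [sum_insert hi]

lemma StrongConvexOn.add_sq_le_of_isMinOn {f : E → ℝ} {w y : E} (hf : StrongConvexOn s m f)
    (hw : IsMinOn f s w) (hws : w ∈ s) (hy : y ∈ s) :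
    f w + m / 2 * ‖y - w‖ ^ 2 ≤ f y := by
  have hseg : ∀ t ∈ Set.Ioo (0 : ℝ) 1, f w + (1 - t) * (m / 2 * ‖y - w‖ ^ 2) ≤ f y := by
    rintro t ⟨ht0, ht1⟩
    have hconv := hf.2 hy hws ht0.le (sub_nonneg.2 ht1.le) (add_sub_cancel t 1)
    have hmin := isMinOn_iff.1 hw _
      (hf.1 hy hws ht0.le (sub_nonneg.2 ht1.le) (add_sub_cancel t 1))
    simp only [smul_eq_mul] at hconv
    nlinarith
  have hlim : Tendsto (fun t : ℝ => f w + (1 - t) * (m / 2 * ‖y - w‖ ^ 2)) (𝓝[>] 0)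
      (𝓝 (f w + m / 2 * ‖y - w‖ ^ 2)) := by
    have hcont : Continuous fun t : ℝ => f w + (1 - t) * (m / 2 * ‖y - w‖ ^ 2) := by fun_prop
    simpa using (hcont.tendsto 0).mono_left nhdsWithin_le_nhds
  exact le_of_tendsto hlim (mem_of_superset (Ioo_mem_nhdsGT one_pos) hseg)

lemma le_add_mul_norm_sub_of_subgradient {f : E → ℝ} {g : E →L[ℝ] ℝ} {y z : E} {G : ℝ}
    (hf : f z ≥ f y + g (z - y) + m / 2 * ‖z - y‖ ^ 2) (hg : ‖g‖ ≤ G) :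
    f y ≤ f z + G * ‖z - y‖ - m / 2 * ‖z - y‖ ^ 2 := by
  have hgz : -g (z - y) ≤ G * ‖z - y‖ :=
    calc -g (z - y) ≤ ‖g (z - y)‖ := neg_le_abs _
      _ ≤ ‖g‖ * ‖z - y‖ := g.le_opNorm _
      _ ≤ G * ‖z - y‖ := by gcongr
  linarith

end StrongConvexity

lemma mul_sub_half_mul_sq_le {c : ℝ} (hc : 0 < c) (G d : ℝ) :
    G * d - c / 2 * d ^ 2 ≤ G ^ 2 / (2 * c) := by
  rw [le_div_iff₀ (by positivity)]
  nlinarith [sq_nonneg (c * d - G)]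

lemma sum_Icc_one_div_le_log_add_one (N : ℕ) :
    ∑ n ∈ Icc 1 N, 1 / (n : ℝ) ≤ Real.log N + 1 := by
  have h := harmonic_le_one_add_log N
  rw [harmonic_eq_sum_Icc, Rat.cast_sum] at h
  push_cast at h
  simpa [add_comm] using h

lemma sum_le_sum_leader_add_mul_harmonic {E : Type*} [NormedAddCommGroup E]
    (f : ℕ → E → ℝ) (x : ℕ → E) {N : ℕ} {α G : ℝ} (hα : 0 < α)
    (hlead : ∀ m < N, ∑ k ∈ Icc 1 m, f k (x (m + 1)) +
      m * α / 2 * ‖x (m + 2) - x (m + 1)‖ ^ 2 ≤ ∑ k ∈ Icc 1 m, f k (x (m + 2)))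
    (hstep : ∀ m < N, f (m + 1) (x (m + 1)) ≤ f (m + 1) (x (m + 2)) +
      G * ‖x (m + 2) - x (m + 1)‖ - α / 2 * ‖x (m + 2) - x (m + 1)‖ ^ 2) :
    ∀ m ≤ N, ∑ t ∈ Icc 1 m, f t (x t) ≤
      ∑ t ∈ Icc 1 m, f t (x (m + 1)) + G ^ 2 / (2 * α) * ∑ t ∈ Icc 1 m, 1 / (t : ℝ) := by
  intro m hm
  induction m with
  | zero => simp
  | succ m ih =>
    have hmN : m < N := hm
    rw [sum_Icc_succ_top (by omega), sum_Icc_succ_top (by omega), sum_Icc_succ_top (by omega)]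
    have hgain := mul_sub_half_mul_sq_le (by positivity : 0 < ((m + 1 : ℕ) : ℝ) * α) G
      ‖x (m + 2) - x (m + 1)‖
    have hdiv : G ^ 2 / (2 * (((m + 1 : ℕ) : ℝ) * α)) =
        G ^ 2 / (2 * α) * (1 / ((m + 1 : ℕ) : ℝ)) := by
      field_simp
    rw [hdiv] at hgain
    push_cast at hgain ⊢
    linarith [ih hmN.le, hlead m hmN, hstep m hmN]

theorem stmt_17_general
    {E : Type*} [NormedAddCommGroup E] [NormedSpace ℝ E]
    (X : Set E) (hX : Convex ℝ X)
    (N : ℕ)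
    (f : ℕ → E → ℝ) (Df : ℕ → E → (E →L[ℝ] ℝ))
    (α G₂ : ℝ) (hα : 0 < α)
    (hsc : ∀ n ∈ Finset.Icc 1 N, ∀ y ∈ X, ∀ z ∈ X,
      f n z ≥ f n y + Df n y (z - y) + α / 2 * ‖z - y‖ ^ 2)
    (hbound : ∀ n ∈ Finset.Icc 1 N, ∀ y ∈ X, ‖Df n y‖ ≤ G₂)
    (x : ℕ → E) (hmem : ∀ n, 1 ≤ n → x n ∈ X)
    (hftl : ∀ n, 1 ≤ n → ∀ y ∈ X,
      ∑ k ∈ Finset.Icc 1 n, f k (x (n + 1)) ≤ ∑ k ∈ Finset.Icc 1 n, f k y) :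
    ∑ n ∈ Finset.Icc 1 N, f n (x n) ≤
        sInf ((fun y => ∑ n ∈ Finset.Icc 1 N, f n y) '' X) +
          G₂ ^ 2 / (2 * α) * ∑ n ∈ Finset.Icc 1 N, (1 / (n : ℝ)) ∧
    sInf ((fun y => ∑ n ∈ Finset.Icc 1 N, f n y) '' X) +
        G₂ ^ 2 / (2 * α) * ∑ n ∈ Finset.Icc 1 N, (1 / (n : ℝ)) ≤
      sInf ((fun y => ∑ n ∈ Finset.Icc 1 N, f n y) '' X) +
        G₂ ^ 2 / (2 * α) * (Real.log N + 1) := by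
  set F : ℕ → E → ℝ := fun m y => ∑ k ∈ Icc 1 m, f k y
  have hconvex : ∀ m ≤ N, StrongConvexOn X (m * α) (F m) := fun m hm => by
    simpa using StrongConvexOn.sum hX fun k hk =>
      strongConvexOn_of_subgradient hX (Df k) (hsc k (Icc_subset_Icc_right hm hk))
  have hleader : ∀ m, IsMinOn (F m) X (x (m + 1)) := by
    rintro (_ | m)
    · simp [F, isMinOn_iff]
    · exact isMinOn_iff.2 (hftl (m + 1) (by omega))
  have hregret := sum_le_sum_leader_add_mul_harmonic f x hα
    (fun m hm => (hconvex m hm.le).add_sq_le_of_isMinOn (hleader m) (hmem _ (by omega))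
      (hmem _ (by omega)))
    (fun m hm => le_add_mul_norm_sub_of_subgradient
      (hsc (m + 1) (mem_Icc.2 ⟨by omega, by omega⟩) _ (hmem _ (by omega)) _ (hmem _ (by omega)))
      (hbound (m + 1) (mem_Icc.2 ⟨by omega, by omega⟩) _ (hmem _ (by omega))))
    N le_rfl
  have hinf : F N (x (N + 1)) ≤ sInf (F N '' X) :=
    le_csInf ⟨_, Set.mem_image_of_mem _ (hmem 1 le_rfl)⟩
      (Set.forall_mem_image.2 (isMinOn_iff.1 (hleader N)))
  refine ⟨by linarith, ?_⟩
  gcongr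
  exact sum_Icc_one_div_le_log_add_one N

/-- Regret bound for Follow-the-Leader with strongly convex losses.
If each `f_n` is differentiable, `α`-strongly convex on `X` with `‖∇f_n‖_* ≤ G₂`, then
the Follow-the-Leader sequence satisfies
`Σ_{n=1}^N f_n(x_n) ≤ inf_X Σ f_n + (G₂²/(2α)) Σ_{n=1}^N 1/n
  ≤ inf_X Σ f_n + (G₂²/(2α))(ln N + 1)`. -/
theorem stmt_17
    {E : Type*} [NormedAddCommGroup E] [NormedSpace ℝ E]
    (X : Set E) (hX : Convex ℝ X)
    (N : ℕ) (hN : 1 ≤ N)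
    (f : ℕ → E → ℝ) (Df : ℕ → E → (E →L[ℝ] ℝ))
    (α G₂ : ℝ) (hα : 0 < α) (hG₂ : 0 < G₂)
    (hgrad : ∀ n ∈ Finset.Icc 1 N, ∀ y ∈ X, HasFDerivWithinAt (f n) (Df n y) X y)
    (hsc : ∀ n ∈ Finset.Icc 1 N, ∀ y ∈ X, ∀ z ∈ X,
      f n z ≥ f n y + Df n y (z - y) + α / 2 * ‖z - y‖ ^ 2)
    (hbound : ∀ n ∈ Finset.Icc 1 N, ∀ y ∈ X, ‖Df n y‖ ≤ G₂)
    (x : ℕ → E) (hmem : ∀ n, 1 ≤ n → x n ∈ X)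
    (hftl : ∀ n, 1 ≤ n → ∀ y ∈ X,
      ∑ k ∈ Finset.Icc 1 n, f k (x (n + 1)) ≤ ∑ k ∈ Finset.Icc 1 n, f k y) :
    ∑ n ∈ Finset.Icc 1 N, f n (x n) ≤
        sInf ((fun y => ∑ n ∈ Finset.Icc 1 N, f n y) '' X) +
          G₂ ^ 2 / (2 * α) * ∑ n ∈ Finset.Icc 1 N, (1 / (n : ℝ)) ∧
    sInf ((fun y => ∑ n ∈ Finset.Icc 1 N, f n y) '' X) +
        G₂ ^ 2 / (2 * α) * ∑ n ∈ Finset.Icc 1 N, (1 / (n : ℝ)) ≤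
      sInf ((fun y => ∑ n ∈ Finset.Icc 1 N, f n y) '' X) +
        G₂ ^ 2 / (2 * α) * (Real.log N + 1) :=
  stmt_17_general X hX N f Df α G₂ hα hsc hbound x hmem hftl
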